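/- Let W : GL⁺(2) → ℝ be objective, isotropic and isochoric. Then there exists a unique function z : [1,∞) → ℝ such that W(F) = z(‖F‖² / (2·det F)) for all F ∈ GL⁺(2), where ‖·‖ denotes the Frobenius norm; moreover z(r) = W(diag(r + √(r² − 1), 1)) for all r ≥ 1. -/

import Mathlib

open Matrix Set

noncomputable section

/-- The space of real 2×2 matrices. -/
abbrev Mat2 : Type := Matrix (Fin 2) (Fin 2) ℝ

/-- The special orthogonal group SO(2): orthogonal 2×2 matrices with determinant 1. -/
def SO2 : Set Mat2 := {Q : Mat2 | Qᵀ * Q = 1 ∧ Q.det = 1}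

/-- A function `W` (viewed on GL⁺(2) = {F | 0 < det F}) is polyconvex if there is a
convex function `P : ℝ^{2×2} × ℝ → ℝ ∪ {+∞}` with `W F = P (F, det F)` on GL⁺(2). -/
def Polyconvex (W : Mat2 → ℝ) : Prop :=
  ∃ P : Mat2 × ℝ → EReal,
    (∀ x y : Mat2 × ℝ, ∀ a b : ℝ, 0 ≤ a → 0 ≤ b → a + b = 1 →
      P (a • x + b • y) ≤ (a : EReal) * P x + (b : EReal) * P y) ∧
    (∀ F : Mat2, 0 < F.det → (W F : EReal) = P (F, F.det))

/-- Rank-one convexity of `W` on GL⁺(2): convexity along rank-one line segments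
lying in GL⁺(2). -/
def RankOneConvex (W : Mat2 → ℝ) : Prop :=
  ∀ F : Mat2, 0 < F.det → ∀ ξ η : Fin 2 → ℝ, ∀ θ : ℝ, θ ∈ Set.Icc (0:ℝ) 1 →
    (∀ t ∈ Set.Icc (0:ℝ) 1, 0 < (F + t • vecMulVec ξ η).det) →
    W (F + (1 - θ) • vecMulVec ξ η) ≤ θ * W F + (1 - θ) * W (F + vecMulVec ξ η)

/-- Objectivity and isotropy: bi-SO(2)-invariance on GL⁺(2). -/
def ObjectiveIsotropic (W : Mat2 → ℝ) : Prop :=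
  ∀ F : Mat2, 0 < F.det → ∀ Q₁ Q₂ : Mat2, Q₁ ∈ SO2 → Q₂ ∈ SO2 →
    W (Q₁ * F * Q₂) = W F

/-- Isochoric: invariance under positive scaling on GL⁺(2). -/
def Isochoric (W : Mat2 → ℝ) : Prop :=
  ∀ F : Mat2, 0 < F.det → ∀ a : ℝ, 0 < a → W (a • F) = W F

/-- The 2×2 diagonal matrix diag(a, b). -/
def diag2 (a b : ℝ) : Mat2 := !![a, 0; 0, b]

/-- The squared Frobenius norm of a 2×2 matrix. -/
def frobSq (F : Mat2) : ℝ := ∑ i, ∑ j, (F i j) ^ 2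

/-- The operator norm of `F` induced by the Euclidean norm on ℝ²:
the supremum of ‖F·x‖ over Euclidean-unit vectors x. -/
def opNorm2 (F : Mat2) : ℝ :=
  sSup {r : ℝ | ∃ x : Fin 2 → ℝ, (x 0) ^ 2 + (x 1) ^ 2 = 1 ∧
    r = Real.sqrt ((F.mulVec x 0) ^ 2 + (F.mulVec x 1) ^ 2)}

/-!
Write `F = α R(φ) + β S(ψ)` with `R(φ)` a rotation and `S(ψ)` a reflection, `α, β ≥ 0`; this is
the singular value decomposition `F = rot x * diag(α + β, α - β) * rot y` with `x ± y = φ, ψ`,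
and `det F = α² - β²`, `‖F‖² = 2 (α² + β²)`. Bi-rotation invariance and scaling invariance
reduce `W F` to `W (diag(t, 1))` with `t = (α + β)/(α - β) ≥ 1`, and the distortion of
`diag(t, 1)` is `(t² + 1)/(2t)`, a bijection of `[1, ∞)` onto itself with inverse
`r ↦ r + √(r² - 1)`.
-/

def rot (θ : ℝ) : Mat2 := !![Real.cos θ, -Real.sin θ; Real.sin θ, Real.cos θ]

lemma rot_mem_SO2 (θ : ℝ) : rot θ ∈ SO2 := by
  have h := Real.sin_sq_add_cos_sq θ
  constructor
  · ext i j
    fin_cases i <;> fin_cases j <;>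
      simp [rot, Matrix.mul_apply, Fin.sum_univ_two] <;> nlinarith
  · rw [rot, Matrix.det_fin_two_of]; nlinarith

lemma det_diag2 (a b : ℝ) : (diag2 a b).det = a * b := by
  rw [diag2, Matrix.det_fin_two_of]; ring

lemma frobSq_diag2 (a b : ℝ) : frobSq (diag2 a b) = a ^ 2 + b ^ 2 := by
  simp [frobSq, diag2, Fin.sum_univ_two]

lemma rot_mul_diag2_mul_rot (x y α β : ℝ) :
    rot x * diag2 (α + β) (α - β) * rot y =
      !![α * Real.cos (x + y) + β * Real.cos (x - y),
           -α * Real.sin (x + y) + β * Real.sin (x - y);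
         α * Real.sin (x + y) + β * Real.sin (x - y),
           α * Real.cos (x + y) - β * Real.cos (x - y)] := by
  simp only [rot, diag2, Matrix.mul_fin_two, Real.cos_add, Real.cos_sub, Real.sin_add,
    Real.sin_sub]
  ext i j
  fin_cases i <;> fin_cases j <;> simp <;> ring

lemma exists_polar (x y : ℝ) :
    ∃ θ : ℝ, √(x ^ 2 + y ^ 2) * Real.cos θ = x ∧ √(x ^ 2 + y ^ 2) * Real.sin θ = y := by
  have hnorm : ‖(⟨x, y⟩ : ℂ)‖ = √(x ^ 2 + y ^ 2) := by
    rw [Complex.norm_def, Complex.normSq_mk]; ring_nf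
  refine ⟨Complex.arg ⟨x, y⟩, ?_, ?_⟩
  · simpa [hnorm] using Complex.norm_mul_cos_arg (⟨x, y⟩ : ℂ)
  · simpa [hnorm] using Complex.norm_mul_sin_arg (⟨x, y⟩ : ℂ)

lemma exists_rot_mul_diag2_mul_rot (F : Mat2) :
    ∃ α β : ℝ, 0 ≤ α ∧ 0 ≤ β ∧ F.det = α ^ 2 - β ^ 2 ∧ frobSq F = 2 * (α ^ 2 + β ^ 2) ∧
      ∃ x y : ℝ, F = rot x * diag2 (α + β) (α - β) * rot y := by
  obtain ⟨φ, hαc, hαs⟩ := exists_polar ((F 0 0 + F 1 1) / 2) ((F 1 0 - F 0 1) / 2)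
  obtain ⟨ψ, hβc, hβs⟩ := exists_polar ((F 0 0 - F 1 1) / 2) ((F 0 1 + F 1 0) / 2)
  set α := √(((F 0 0 + F 1 1) / 2) ^ 2 + ((F 1 0 - F 0 1) / 2) ^ 2)
  set β := √(((F 0 0 - F 1 1) / 2) ^ 2 + ((F 0 1 + F 1 0) / 2) ^ 2)
  have hα : α ^ 2 = ((F 0 0 + F 1 1) / 2) ^ 2 + ((F 1 0 - F 0 1) / 2) ^ 2 :=
    Real.sq_sqrt (by positivity)
  have hβ : β ^ 2 = ((F 0 0 - F 1 1) / 2) ^ 2 + ((F 0 1 + F 1 0) / 2) ^ 2 :=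
    Real.sq_sqrt (by positivity)
  refine ⟨α, β, Real.sqrt_nonneg _, Real.sqrt_nonneg _, ?_, ?_, (φ + ψ) / 2, (φ - ψ) / 2, ?_⟩
  · rw [Matrix.det_fin_two, hα, hβ]; ring
  · simp only [frobSq, Fin.sum_univ_two]; linear_combination (-2) * hα - 2 * hβ
  · rw [rot_mul_diag2_mul_rot, show (φ + ψ) / 2 + (φ - ψ) / 2 = φ by ring,
      show (φ + ψ) / 2 - (φ - ψ) / 2 = ψ by ring, Matrix.eta_fin_two F]
    ext i j
    fin_cases i <;> fin_cases j <;> simp <;> linarith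

lemma Isochoric.apply_diag2 {W : Mat2 → ℝ} (hIso : Isochoric W) {a b : ℝ} (ha : 0 < a)
    (hb : 0 < b) : W (diag2 a b) = W (diag2 (a / b) 1) := by
  have hscale : diag2 a b = b • diag2 (a / b) 1 := by
    ext i j
    fin_cases i <;> fin_cases j <;> simp [diag2, mul_div_cancel₀ a hb.ne']
  rw [hscale]
  exact hIso _ (by rw [det_diag2]; positivity) b hb

def distortion (F : Mat2) : ℝ := frobSq F / (2 * F.det)

lemma distortion_diag2 (t : ℝ) : distortion (diag2 t 1) = (t ^ 2 + 1) / (2 * t) := by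
  rw [distortion, frobSq_diag2, det_diag2]; ring

lemma exists_apply_eq_apply_diag2 {W : Mat2 → ℝ} (hOI : ObjectiveIsotropic W)
    (hIso : Isochoric W) {F : Mat2} (hF : 0 < F.det) :
    ∃ t : ℝ, 1 ≤ t ∧ W F = W (diag2 t 1) ∧ distortion F = distortion (diag2 t 1) := by
  obtain ⟨α, β, hα, hβ, hdet, hfrob, x, y, rfl⟩ := exists_rot_mul_diag2_mul_rot F
  have hαβ : 0 < α - β := by nlinarith
  have hαβ' : 0 < α + β := by linarith
  have hsq : α ^ 2 - β ^ 2 ≠ 0 := by rw [← hdet]; exact hF.ne'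
  refine ⟨(α + β) / (α - β), by rw [le_div_iff₀ hαβ]; linarith, ?_, ?_⟩
  · rw [hOI _ (by rw [det_diag2]; positivity) _ _ (rot_mem_SO2 x) (rot_mem_SO2 y)]
    exact hIso.apply_diag2 hαβ' hαβ
  · rw [distortion_diag2, distortion, hfrob, hdet]
    field_simp
    ring

def stretch (r : ℝ) : ℝ := r + √(r ^ 2 - 1)

lemma one_le_stretch {r : ℝ} (hr : 1 ≤ r) : 1 ≤ stretch r := by
  have := Real.sqrt_nonneg (r ^ 2 - 1)
  rw [stretch]; linarith

lemma distortion_diag2_stretch {r : ℝ} (hr : 1 ≤ r) : distortion (diag2 (stretch r) 1) = r := by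
  have hsq : √(r ^ 2 - 1) ^ 2 = r ^ 2 - 1 := Real.sq_sqrt (by nlinarith)
  have hpos : 0 < stretch r := by linarith [one_le_stretch hr]
  rw [distortion_diag2, div_eq_iff (by positivity), stretch]
  linear_combination hsq

lemma stretch_distortion_diag2 {t : ℝ} (ht : 1 ≤ t) : stretch (distortion (diag2 t 1)) = t := by
  have hroot : (distortion (diag2 t 1)) ^ 2 - 1 = ((t ^ 2 - 1) / (2 * t)) ^ 2 := by
    rw [distortion_diag2]; field_simp; ring
  have hnonneg : 0 ≤ (t ^ 2 - 1) / (2 * t) := div_nonneg (by nlinarith) (by linarith)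
  rw [stretch, hroot, Real.sqrt_sq hnonneg, distortion_diag2]
  field_simp
  ring

lemma ObjectiveIsotropic.apply_eq_apply_diag2_stretch {W : Mat2 → ℝ} (hOI : ObjectiveIsotropic W)
    (hIso : Isochoric W) {F : Mat2} (hF : 0 < F.det) :
    W F = W (diag2 (stretch (distortion F)) 1) := by
  obtain ⟨t, ht, hW, hdist⟩ := exists_apply_eq_apply_diag2 hOI hIso hF
  rw [hdist, stretch_distortion_diag2 ht, hW]

/-- representation of objective, isotropic, isochoric `W` via a unique
function `z : [1,∞) → ℝ` of the distortion `‖F‖²/(2 det F)`, with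
`z(r) = W(diag(r + √(r²−1), 1))`. -/
theorem isochoric_representation_distortion (W : Mat2 → ℝ)
    (hOI : ObjectiveIsotropic W) (hIso : Isochoric W) :
    ∃ z : ℝ → ℝ,
      (∀ F : Mat2, 0 < F.det → W F = z (frobSq F / (2 * F.det))) ∧
      (∀ r : ℝ, 1 ≤ r → z r = W (diag2 (r + Real.sqrt (r ^ 2 - 1)) 1)) ∧
      (∀ z' : ℝ → ℝ,
        (∀ F : Mat2, 0 < F.det → W F = z' (frobSq F / (2 * F.det))) →
        ∀ r : ℝ, 1 ≤ r → z' r = z r) := by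
  refine ⟨fun r => W (diag2 (stretch r) 1), fun F hF => hOI.apply_eq_apply_diag2_stretch hIso hF,
    fun r _ => rfl, fun z' hz' r hr => ?_⟩
  have hdet : 0 < (diag2 (stretch r) 1).det := by
    rw [det_diag2, mul_one]; linarith [one_le_stretch hr]
  calc z' r = z' (distortion (diag2 (stretch r) 1)) := by rw [distortion_diag2_stretch hr]
    _ = W (diag2 (stretch r) 1) := (hz' _ hdet).symm
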